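/- arXiv:1905.08334 — 3 statements merged into one kernel-verified Lean document; each statement's English description precedes it below -/
import Mathlib

section
/- If (X,d) is a complete CAT(0) space, then every closed and convex subset of X that is geodesically bounded is directionally bounded. -/
open Set Filter Metric

section Defs

variable {X : Type*} [MetricSpace X]

/-- A unit-speed geodesic defined on `[a, b]`. -/
def IsGeodesicOn (γ : ℝ → X) (a b : ℝ) : Prop :=
  ∀ s ∈ Set.Icc a b, ∀ t ∈ Set.Icc a b, dist (γ s) (γ t) = |s - t|

/-- `S` is a geodesic segment joining `x` and `y`. -/
def IsGeodesicSegment (S : Set X) (x y : X) : Prop :=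
  ∃ (a b : ℝ) (γ : ℝ → X), a ≤ b ∧ IsGeodesicOn γ a b ∧ γ a = x ∧ γ b = y ∧
    S = γ '' Set.Icc a b

/-- A geodesic space: every two points are joined by a geodesic segment. -/
def GeodesicSpace (X : Type*) [MetricSpace X] : Prop :=
  ∀ x y : X, ∃ S : Set X, IsGeodesicSegment S x y

/-- A uniquely geodesic space. -/
def UniquelyGeodesic (X : Type*) [MetricSpace X] : Prop :=
  ∀ x y : X, ∃! S : Set X, IsGeodesicSegment S x y

/-- `S` is contained in the closed `M`-neighborhood of `T`. -/
def InClosedNbhd (S T : Set X) (M : ℝ) : Prop :=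
  ∀ p ∈ S, ∃ q ∈ T, dist p q ≤ M

/-- A triangle with sides `S1, S2, S3` is `M`-slim. -/
def SlimTriangle (S1 S2 S3 : Set X) (M : ℝ) : Prop :=
  InClosedNbhd S1 (S2 ∪ S3) M ∧ InClosedNbhd S2 (S1 ∪ S3) M ∧ InClosedNbhd S3 (S1 ∪ S2) M

/-- `X` is `δ`-hyperbolic: every geodesic triangle is `δ`-slim. -/
def DeltaHyperbolic (X : Type*) [MetricSpace X] (δ : ℝ) : Prop :=
  ∀ x y z : X, ∀ S1 S2 S3 : Set X,
    IsGeodesicSegment S1 x y → IsGeodesicSegment S2 y z → IsGeodesicSegment S3 z x →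
    SlimTriangle S1 S2 S3 δ

/-- A geodesic ray `γ : [0, ∞) → X`. -/
def IsGeodesicRay (γ : ℝ → X) : Prop :=
  ∀ s ∈ Set.Ici (0:ℝ), ∀ t ∈ Set.Ici (0:ℝ), dist (γ s) (γ t) = |s - t|

/-- A set is geodesically bounded if it contains no geodesic ray. -/
def GeodesicallyBounded (A : Set X) : Prop :=
  ¬ ∃ γ : ℝ → X, IsGeodesicRay γ ∧ ∀ t ∈ Set.Ici (0:ℝ), γ t ∈ A

/-- A directional curve `γ : [0, ∞) → X` (with some constant `b ≥ 0`). -/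
def IsDirectionalCurve (γ : ℝ → X) : Prop :=
  ∃ b : ℝ, 0 ≤ b ∧ ∀ s ∈ Set.Ici (0:ℝ), ∀ t ∈ Set.Ici (0:ℝ),
    |s - t| - b ≤ dist (γ s) (γ t) ∧ dist (γ s) (γ t) ≤ |s - t|

/-- A set is directionally bounded if it contains no directional curve. -/
def DirectionallyBounded (A : Set X) : Prop :=
  ¬ ∃ γ : ℝ → X, IsDirectionalCurve γ ∧ ∀ t ∈ Set.Ici (0:ℝ), γ t ∈ A

/-- A subset of a geodesic space is convex if every geodesic segment joining two of its
points is contained in it. -/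
def GeodesicConvex (A : Set X) : Prop :=
  ∀ x ∈ A, ∀ y ∈ A, ∀ S : Set X, IsGeodesicSegment S x y → S ⊆ A

/-- The comparison point in the Euclidean plane: the point on the segment from `x'` to `y'`
(of length `L`) at distance `t` from `x'`. -/
noncomputable def cmpPt (x' y' : EuclideanSpace ℝ (Fin 2)) (L t : ℝ) :
    EuclideanSpace ℝ (Fin 2) :=
  AffineMap.lineMap x' y' (t / L)

/-- `X` is a CAT(0) space: it is geodesic and for every geodesic triangle and every
comparison triangle in the Euclidean plane, distances between points on the triangle are
bounded by the distances between the corresponding comparison points. -/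
def CAT0Space (X : Type*) [MetricSpace X] : Prop :=
  GeodesicSpace X ∧
  ∀ (x y z : X) (γ1 γ2 γ3 : ℝ → X),
    IsGeodesicOn γ1 0 (dist x y) → γ1 0 = x → γ1 (dist x y) = y →
    IsGeodesicOn γ2 0 (dist y z) → γ2 0 = y → γ2 (dist y z) = z →
    IsGeodesicOn γ3 0 (dist z x) → γ3 0 = z → γ3 (dist z x) = x →
    ∀ x' y' z' : EuclideanSpace ℝ (Fin 2),
      dist x' y' = dist x y → dist y' z' = dist y z → dist z' x' = dist z x →
      (∀ s ∈ Set.Icc (0:ℝ) (dist x y), ∀ t ∈ Set.Icc (0:ℝ) (dist y z),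
        dist (γ1 s) (γ2 t) ≤ dist (cmpPt x' y' (dist x y) s) (cmpPt y' z' (dist y z) t)) ∧
      (∀ s ∈ Set.Icc (0:ℝ) (dist y z), ∀ t ∈ Set.Icc (0:ℝ) (dist z x),
        dist (γ2 s) (γ3 t) ≤ dist (cmpPt y' z' (dist y z) s) (cmpPt z' x' (dist z x) t)) ∧
      (∀ s ∈ Set.Icc (0:ℝ) (dist z x), ∀ t ∈ Set.Icc (0:ℝ) (dist x y),
        dist (γ3 s) (γ1 t) ≤ dist (cmpPt z' x' (dist z x) s) (cmpPt x' y' (dist x y) t))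

/-- Busemann convexity. -/
def BusemannConvex (X : Type*) [MetricSpace X] : Prop :=
  GeodesicSpace X ∧
  ∀ (a b c d : ℝ) (γ σ : ℝ → X), a ≤ b → c ≤ d →
    IsGeodesicOn γ a b → IsGeodesicOn σ c d →
    ∀ t ∈ Set.Icc (0:ℝ) 1,
      dist (γ ((1-t)*a + t*b)) (σ ((1-t)*c + t*d)) ≤
        (1-t) * dist (γ a) (σ c) + t * dist (γ b) (σ d)

/-- A `(lam, eps)`-quasi-geodesic defined on `[a, b]`. -/
def IsQuasiGeodesicOn (lam eps : ℝ) (γ : ℝ → X) (a b : ℝ) : Prop :=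
  ∀ s ∈ Set.Icc a b, ∀ t ∈ Set.Icc a b,
    (1/lam) * |s - t| - eps ≤ dist (γ s) (γ t) ∧ dist (γ s) (γ t) ≤ lam * |s - t| + eps

/-- A `(lam, eps)`-quasi-geodesic ray. -/
def IsQuasiGeodesicRay (lam eps : ℝ) (γ : ℝ → X) : Prop :=
  ∀ s ∈ Set.Ici (0:ℝ), ∀ t ∈ Set.Ici (0:ℝ),
    (1/lam) * |s - t| - eps ≤ dist (γ s) (γ t) ∧ dist (γ s) (γ t) ≤ lam * |s - t| + eps

/-- A `k`-local `lam`-quasi-geodesic ray: a `(lam, eps)`-quasi-geodesic ray locally,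
for every `eps > 0`. -/
def IsLocalQuasiGeodesicRay (k lam : ℝ) (γ : ℝ → X) : Prop :=
  ∀ eps > (0:ℝ), ∀ s ∈ Set.Ici (0:ℝ), ∀ t ∈ Set.Ici (0:ℝ), |s - t| ≤ k →
    (1/lam) * |s - t| - eps ≤ dist (γ s) (γ t) ∧ dist (γ s) (γ t) ≤ lam * |s - t| + eps

/-- `S` is the image of a `lam`-quasi-geodesic joining `x` and `y`
(i.e. a `(lam, eps)`-quasi-geodesic for every `eps > 0`). -/
def IsQuasiGeodesicSegment (lam : ℝ) (S : Set X) (x y : X) : Prop :=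
  ∃ (a b : ℝ) (γ : ℝ → X), a ≤ b ∧ (∀ eps > (0:ℝ), IsQuasiGeodesicOn lam eps γ a b) ∧
    γ a = x ∧ γ b = y ∧ S = γ '' Set.Icc a b

/-- Every `lam`-quasi-geodesic triangle in `X` is `M`-slim. -/
def QuasiGeodesicTrianglesSlim (X : Type*) [MetricSpace X] (lam M : ℝ) : Prop :=
  ∀ x y z : X, ∀ S1 S2 S3 : Set X,
    IsQuasiGeodesicSegment lam S1 x y → IsQuasiGeodesicSegment lam S2 y z →
    IsQuasiGeodesicSegment lam S3 z x → SlimTriangle S1 S2 S3 M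

/-- A play of the Lion-Man game in `A` with speed `D`. -/
def IsLionManPlay (A : Set X) (D : ℝ) (L M : ℕ → X) : Prop :=
  (∀ n, L n ∈ A) ∧ (∀ n, M n ∈ A) ∧
  (∀ n, ∃ S : Set X, IsGeodesicSegment S (L n) (M n) ∧ L (n+1) ∈ S) ∧
  (∀ n, dist (L n) (L (n+1)) = min D (dist (L n) (M n))) ∧
  (∀ n, dist (M n) (M (n+1)) ≤ D)

/-- The lion wins a play if `d(L_{n+1}, M_n) → 0`. -/
def LionWins (L M : ℕ → X) : Prop :=
  Filter.Tendsto (fun n => dist (L (n+1)) (M n)) Filter.atTop (nhds 0)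

/-- The lion always wins the Lion-Man game played in `A`. -/
def LionAlwaysWins (A : Set X) : Prop :=
  ∀ D > (0:ℝ), ∀ L M : ℕ → X, IsLionManPlay A D L M → LionWins L M

end Defs

/-!
Let `γ` be a directional curve in `A` with defect `b`, and let `σₙ` be the geodesic from `γ 0`
to `γ n`; it lies in `A` by convexity. For `m ≤ n` the points `γ 0`, `γ m`, `γ n` are collinear
up to the error `b`, so comparing the triangle they span with its Euclidean model at the vertex
`γ 0` gives `d(σₘ t, σₙ t)² ≤ t² (2u + u²)` with `u = b / (m - b)`. Hence `n ↦ σₙ t` is Cauchy for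
every `t`; by completeness the `σₙ` converge pointwise to a geodesic ray, which lies in `A`
because `A` is closed.
-/

open AffineMap Topology

theorem dist_lineMap_lineMap_sq {V : Type*} [NormedAddCommGroup V] [InnerProductSpace ℝ V]
    (x y z : V) (s r : ℝ) :
    dist (lineMap x y s) (lineMap x z r) ^ 2 =
      s ^ 2 * dist x y ^ 2 + r ^ 2 * dist x z ^ 2 -
        s * r * (dist x y ^ 2 + dist x z ^ 2 - dist y z ^ 2) := by
  have hyz : dist y z = ‖(y - x) - (z - x)‖ := by rw [dist_eq_norm, sub_sub_sub_cancel_right]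
  rw [hyz, norm_sub_sq_real, dist_eq_norm, lineMap_apply_module', lineMap_apply_module',
    add_sub_add_right_eq_sub, norm_sub_sq_real, norm_smul, norm_smul, inner_smul_left,
    inner_smul_right, dist_comm x y, dist_comm x z, dist_eq_norm, dist_eq_norm]
  simp only [Real.norm_eq_abs, mul_pow, sq_abs, conj_trivial]
  ring

theorem exists_euclideanTriangle {P Q R : ℝ} (hP : P ≤ Q + R) (hQ : Q ≤ P + R)
    (hR : R ≤ P + Q) :
    ∃ x y z : EuclideanSpace ℝ (Fin 2), dist x y = P ∧ dist y z = Q ∧ dist z x = R := by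
  have hP0 : 0 ≤ P := by linarith
  have hR0 : 0 ≤ R := by linarith
  -- for `P = 0` this is `0` (division by zero), and the construction still works since `Q = R`
  set a := (P ^ 2 + R ^ 2 - Q ^ 2) / (2 * P)
  have ha : a ^ 2 ≤ R ^ 2 := by
    rcases hP0.eq_or_lt with rfl | hP0
    · simp [a]; positivity
    · apply sq_le_sq'
      · rw [le_div_iff₀ (by positivity)]; nlinarith
      · rw [div_le_iff₀ (by positivity)]; nlinarith
  have hQa : (P - a) ^ 2 + (R ^ 2 - a ^ 2) = Q ^ 2 := by
    rcases hP0.eq_or_lt with rfl | hP0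
    · simp only [a, zero_sub, zero_pow two_ne_zero, mul_zero, div_zero]
      nlinarith
    · simp only [a]; field_simp; ring
  refine ⟨0, !₂[P, 0], !₂[a, √(R ^ 2 - a ^ 2)], ?_, ?_, ?_⟩ <;>
    simp [EuclideanSpace.dist_eq, EuclideanSpace.norm_eq, Fin.sum_univ_two, Real.dist_eq, sq_abs,
      Real.sq_sqrt (sub_nonneg.2 ha), hQa, Real.sqrt_sq, hP0, hR0, show 0 ≤ Q by linarith]

theorem sq_sub_sq_div_mul_le {P Q R b s : ℝ} (hb : 0 ≤ b) (hs : b < s) (hP : s - b ≤ P)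
    (hR : s - b ≤ R) (hQ : 0 ≤ Q) (hQPR : Q ≤ R - P + b) :
    (Q ^ 2 - (R - P) ^ 2) / (P * R) ≤ 2 * (b / (s - b)) + (b / (s - b)) ^ 2 := by
  have hsb : 0 < s - b := sub_pos.2 hs
  have hP0 : 0 < P := hsb.trans_le hP
  have hR0 : 0 < R := hsb.trans_le hR
  calc (Q ^ 2 - (R - P) ^ 2) / (P * R) ≤ (2 * b * R + b ^ 2) / (P * R) := by
        gcongr; nlinarith
    _ = 2 * b / P + b ^ 2 / (P * R) := by field_simp
    _ ≤ 2 * b / (s - b) + b ^ 2 / ((s - b) * (s - b)) := by gcongr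
    _ = 2 * (b / (s - b)) + (b / (s - b)) ^ 2 := by rw [mul_div_assoc, div_pow, sq (s - b)]

theorem cauchySeq_of_eventually_dist_le {α : Type*} [PseudoMetricSpace α] {u : ℕ → α}
    {f : ℕ → ℝ} (hf : Tendsto f atTop (𝓝 0)) (h : ∀ᶠ m in atTop, ∀ n ≥ m, dist (u m) (u n) ≤ f m) :
    CauchySeq u := by
  refine Metric.cauchySeq_iff'.2 fun ε hε => ?_
  obtain ⟨N, hN, hfN⟩ := (h.and (hf.eventually_lt_const hε)).exists
  exact ⟨N, fun n hn => (dist_comm (u n) (u N)).trans_le (hN n hn) |>.trans_lt hfN⟩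

section

variable {X : Type*} [MetricSpace X]

namespace IsGeodesicOn

variable {γ : ℝ → X} {a b : ℝ}

theorem dist_left_right (h : IsGeodesicOn γ a b) (hab : a ≤ b) : dist (γ a) (γ b) = b - a := by
  rw [h a ⟨le_rfl, hab⟩ b ⟨hab, le_rfl⟩, abs_sub_comm, abs_of_nonneg (sub_nonneg.2 hab)]

theorem comp_const_add (h : IsGeodesicOn γ a b) :
    IsGeodesicOn (fun t => γ (a + t)) 0 (b - a) := by
  intro s hs t ht
  rw [h (a + s) ⟨by linarith [hs.1], by linarith [hs.2]⟩ (a + t)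
    ⟨by linarith [ht.1], by linarith [ht.2]⟩, add_sub_add_left_eq_sub]

theorem comp_const_sub (h : IsGeodesicOn γ a b) :
    IsGeodesicOn (fun t => γ (a + b - t)) a b := by
  intro s hs t ht
  rw [h _ ⟨by linarith [hs.2], by linarith [hs.1]⟩ _ ⟨by linarith [ht.2], by linarith [ht.1]⟩,
    sub_sub_sub_cancel_left, abs_sub_comm]

end IsGeodesicOn

theorem GeodesicSpace.exists_isGeodesicOn (hX : GeodesicSpace X) (x y : X) :
    ∃ σ : ℝ → X, IsGeodesicOn σ 0 (dist x y) ∧ σ 0 = x ∧ σ (dist x y) = y := by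
  obtain ⟨-, a, b, γ, hab, hγ, rfl, rfl, -⟩ := hX x y
  refine ⟨fun t => γ (a + t), ?_, by simp, ?_⟩ <;> rw [hγ.dist_left_right hab]
  · exact hγ.comp_const_add
  · simp

theorem GeodesicConvex.mapsTo_of_isGeodesicOn {A : Set X} (hA : GeodesicConvex A)
    {γ : ℝ → X} {a b : ℝ} (hγ : IsGeodesicOn γ a b) (hab : a ≤ b) (ha : γ a ∈ A)
    (hb : γ b ∈ A) : MapsTo γ (Icc a b) A :=
  fun _ ht => hA _ ha _ hb _ ⟨a, b, γ, hab, hγ, rfl, rfl, rfl⟩ (mem_image_of_mem γ ht)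

/-- The right-hand side is the squared distance between the comparison points at distance `t`
from the apex, by the law of cosines in the comparison triangle. -/
theorem CAT0Space.dist_sq_le (hX : CAT0Space X) {p x y : X} {σ₁ σ₂ : ℝ → X}
    (h₁ : IsGeodesicOn σ₁ 0 (dist p x)) (h₁0 : σ₁ 0 = p) (h₁1 : σ₁ (dist p x) = x)
    (h₂ : IsGeodesicOn σ₂ 0 (dist p y)) (h₂0 : σ₂ 0 = p) (h₂1 : σ₂ (dist p y) = y)
    (hx : p ≠ x) (hy : p ≠ y) {t : ℝ} (ht : 0 ≤ t) (htx : t ≤ dist p x) (hty : t ≤ dist p y) :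
    dist (σ₁ t) (σ₂ t) ^ 2 ≤
      t ^ 2 * ((dist x y ^ 2 - (dist p y - dist p x) ^ 2) / (dist p x * dist p y)) := by
  obtain ⟨τ, hτ, hτ0, hτ1⟩ := hX.1.exists_isGeodesicOn x y
  -- `σ₂` reversed runs from `y` to `p`, so `p` is where the first and third sides of `p x y` meet.
  have h₃ : IsGeodesicOn (fun s => σ₂ (0 + dist p y - s)) 0 (dist y p) :=
    dist_comm p y ▸ h₂.comp_const_sub
  obtain ⟨x', y', z', hxy, hyz, hzx⟩ := exists_euclideanTriangle
    (dist_triangle p y x |>.trans_eq (by rw [dist_comm p y, dist_comm y x, add_comm]))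
    (dist_triangle x p y |>.trans_eq (by rw [dist_comm x p, dist_comm p y]))
    (dist_triangle y x p |>.trans_eq (by rw [dist_comm y x, dist_comm x p, add_comm]))
  have hcmp := (hX.2 p x y σ₁ τ _ h₁ h₁0 h₁1 hτ hτ0 hτ1 h₃ (by simpa [dist_comm] using h₂1)
    (by simpa [dist_comm] using h₂0) x' y' z' hxy hyz hzx).2.2 (dist y p - t)
    ⟨by linarith [dist_comm p y], by linarith⟩ t ⟨ht, htx⟩
  simp only [zero_add, dist_comm y p, sub_sub_cancel, cmpPt] at hcmp
  rw [← one_sub_div (dist_pos.2 hy).ne', lineMap_apply_one_sub] at hcmp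
  have hP := dist_pos.2 hx
  have hR := dist_pos.2 hy
  calc dist (σ₁ t) (σ₂ t) ^ 2
      ≤ dist (lineMap x' z' (t / dist p y)) (lineMap x' y' (t / dist p x)) ^ 2 := by
        rw [dist_comm]; gcongr
    _ = _ := by
      rw [dist_lineMap_lineMap_sq, dist_comm x' z', hzx, dist_comm y p, hxy, dist_comm z' y', hyz]
      field_simp
      ring

theorem isGeodesicRay_of_tendsto {σ : ℕ → ℝ → X} {D : ℕ → ℝ}
    (hσ : ∀ n, IsGeodesicOn (σ n) 0 (D n)) (hD : Tendsto D atTop atTop) {r : ℝ → X}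
    (hr : ∀ t ≥ 0, Tendsto (fun n => σ n t) atTop (𝓝 (r t))) : IsGeodesicRay r := by
  intro s hs t ht
  refine tendsto_nhds_unique ((hr s hs).dist (hr t ht)) (tendsto_const_nhds.congr' ?_)
  filter_upwards [hD.eventually_ge_atTop s, hD.eventually_ge_atTop t] with n hns hnt
  exact (hσ n s ⟨hs, hns⟩ t ⟨ht, hnt⟩).symm

namespace IsDirectionalCurve

variable {γ : ℝ → X}

theorem exists_bounds (hγ : IsDirectionalCurve γ) :
    ∃ b, 0 ≤ b ∧ ∀ ⦃s t : ℝ⦄, 0 ≤ s → s ≤ t →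
      t - s - b ≤ dist (γ s) (γ t) ∧ dist (γ s) (γ t) ≤ t - s := by
  obtain ⟨b, hb, hγ⟩ := hγ
  refine ⟨b, hb, fun s t hs hst => ?_⟩
  have := hγ s hs t (hs.trans hst)
  rwa [abs_sub_comm, abs_of_nonneg (sub_nonneg.2 hst)] at this

theorem tendsto_dist_atTop (hγ : IsDirectionalCurve γ) :
    Tendsto (fun s => dist (γ 0) (γ s)) atTop atTop := by
  obtain ⟨b, -, hγ⟩ := hγ.exists_bounds
  refine tendsto_atTop_mono' _ ?_ (tendsto_atTop_add_const_right _ (-b) tendsto_id)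
  filter_upwards [eventually_ge_atTop 0] with s hs
  simpa [← sub_eq_add_neg] using (hγ le_rfl hs).1

end IsDirectionalCurve

theorem CAT0Space.cauchySeq_of_isDirectionalCurve (hX : CAT0Space X) {γ : ℝ → X}
    (hγ : IsDirectionalCurve γ) {σ : ℕ → ℝ → X}
    (hσ : ∀ n, IsGeodesicOn (σ n) 0 (dist (γ 0) (γ n))) (hσ0 : ∀ n, σ n 0 = γ 0)
    (hσ1 : ∀ n, σ n (dist (γ 0) (γ n)) = γ n) {t : ℝ} (ht : 0 ≤ t) :
    CauchySeq fun n => σ n t := by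
  obtain ⟨b, hb, hγ⟩ := hγ.exists_bounds
  set ε : ℝ → ℝ := fun s => 2 * (b / (s - b)) + (b / (s - b)) ^ 2
  have hε : Tendsto (fun m : ℕ => ε m) atTop (𝓝 0) := by
    have hu : Tendsto (fun m : ℕ => b / ((m : ℝ) - b)) atTop (𝓝 0) :=
      tendsto_const_nhds.div_atTop (tendsto_atTop_add_const_right _ (-b)
        tendsto_natCast_atTop_atTop)
    simpa using (hu.const_mul 2).add (hu.pow 2)
  refine cauchySeq_of_eventually_dist_le (f := fun m => √(t ^ 2 * ε m)) ?_ ?_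
  · simpa using ((hε.const_mul (t ^ 2)).sqrt)
  filter_upwards [tendsto_natCast_atTop_atTop.eventually_gt_atTop (t + b)] with m hm n hmn
  have hmn' : (m : ℝ) ≤ n := Nat.cast_le.2 hmn
  obtain ⟨hP, hPm⟩ := hγ le_rfl m.cast_nonneg
  obtain ⟨hR, -⟩ := hγ le_rfl n.cast_nonneg
  have hQ := (hγ m.cast_nonneg hmn').2
  simp only [sub_zero] at hP hPm hR
  have hbound := sq_sub_sq_div_mul_le hb (by linarith) hP (by linarith) dist_nonneg
    (by linarith : dist (γ m) (γ n) ≤ dist (γ 0) (γ n) - dist (γ 0) (γ m) + b)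
  refine Real.le_sqrt_of_sq_le ?_
  calc dist (σ m t) (σ n t) ^ 2 ≤ t ^ 2 * ((dist (γ m) (γ n) ^ 2 -
        (dist (γ 0) (γ n) - dist (γ 0) (γ m)) ^ 2) / (dist (γ 0) (γ m) * dist (γ 0) (γ n))) :=
      hX.dist_sq_le (hσ m) (hσ0 m) (hσ1 m) (hσ n) (hσ0 n) (hσ1 n)
        (dist_pos.1 (by linarith)) (dist_pos.1 (by linarith)) ht (by linarith) (by linarith)
    _ ≤ t ^ 2 * ε m := by gcongr

end

/-- In a complete CAT(0) space, every closed and convex subset that is geodesically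
bounded is directionally bounded. -/
theorem stmt1 {X : Type*} [MetricSpace X] [CompleteSpace X] (hX : CAT0Space X)
    (A : Set X) (hclosed : IsClosed A) (hconv : GeodesicConvex A)
    (hgb : GeodesicallyBounded A) : DirectionallyBounded A := by
  rintro ⟨γ, hγ, hγA⟩
  choose σ hσ hσ0 hσ1 using fun n : ℕ => hX.1.exists_isGeodesicOn (γ 0) (γ n)
  have hσA : ∀ n : ℕ, MapsTo (σ n) (Icc 0 (dist (γ 0) (γ n))) A := fun n =>
    hconv.mapsTo_of_isGeodesicOn (hσ n) dist_nonneg ((hσ0 n).symm ▸ hγA 0 self_mem_Ici)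
      ((hσ1 n).symm ▸ hγA n (mem_Ici.2 n.cast_nonneg))
  have hD := hγ.tendsto_dist_atTop.comp tendsto_natCast_atTop_atTop
  have : Nonempty X := ⟨γ 0⟩
  have hr : ∀ t ≥ 0, Tendsto (fun n => σ n t) atTop (𝓝 (limUnder atTop fun n => σ n t)) :=
    fun t ht => (hX.cauchySeq_of_isDirectionalCurve hγ hσ hσ0 hσ1 ht).tendsto_limUnder
  refine hgb ⟨_, isGeodesicRay_of_tendsto hσ hD hr,
    fun t ht => hclosed.mem_of_tendsto (hr t ht) ?_⟩
  filter_upwards [hD.eventually_ge_atTop t] with n hn using hσA n ⟨ht, hn⟩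
end

section
/- Let (X,d) be a δ-hyperbolic geodesic space, λ ≥ 1, and M ≥ 0 such that every λ-quasi-geodesic triangle in X is M-slim. If γ:[0,∞)→X is a k-local λ-quasi-geodesic ray with k > 8λM, then γ is a (λ*,ε)-quasi-geodesic ray, where λ* = (1/λ − 4M/(k/2 + λM))⁻¹ and ε = 2M. -/
open Set Filter Metric

section Aux

variable {X : Type*} [MetricSpace X]

lemma IsGeodesicSegment.left_mem {S : Set X} {p q : X} (h : IsGeodesicSegment S p q) :
    p ∈ S := by
  obtain ⟨a, b, g, hab, hg, hga, hgb, hS⟩ := h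
  exact hS ▸ ⟨a, ⟨le_refl a, hab⟩, hga⟩

lemma IsGeodesicSegment.right_mem {S : Set X} {p q : X} (h : IsGeodesicSegment S p q) :
    q ∈ S := by
  obtain ⟨a, b, g, hab, hg, hga, hgb, hS⟩ := h
  exact hS ▸ ⟨b, ⟨hab, le_refl b⟩, hgb⟩

lemma IsGeodesicSegment.dist_add {S : Set X} {p q r : X} (h : IsGeodesicSegment S p q)
    (hr : r ∈ S) : dist p r + dist r q = dist p q := by
  obtain ⟨a, b, g, hab, hg, hga, hgb, hS⟩ := h
  subst hS hga hgb
  obtain ⟨u, hu, rfl⟩ := hr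
  have h1 := hg a ⟨le_refl a, hab⟩ u hu
  have h2 := hg u hu b ⟨hab, le_refl b⟩
  have h3 := hg a ⟨le_refl a, hab⟩ b ⟨hab, le_refl b⟩
  rw [h1, h2, h3, abs_of_nonpos (by linarith [hu.1]), abs_of_nonpos (by linarith [hu.2]),
    abs_of_nonpos (by linarith)]
  ring

lemma IsGeodesicSegment.symm {S : Set X} {p q : X} (h : IsGeodesicSegment S p q) :
    IsGeodesicSegment S q p := by
  obtain ⟨a, b, g, hab, hg, hga, hgb, hS⟩ := h
  refine ⟨a, b, fun u => g (a + b - u), hab, ?_, by simpa using hgb, by simpa using hga, ?_⟩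
  · intro u hu v hv
    have h1 : a + b - u ∈ Set.Icc a b := ⟨by linarith [hu.2], by linarith [hu.1]⟩
    have h2 : a + b - v ∈ Set.Icc a b := ⟨by linarith [hv.2], by linarith [hv.1]⟩
    rw [hg _ h1 _ h2, show a + b - u - (a + b - v) = v - u by ring, abs_sub_comm]
  · rw [hS]
    ext x
    constructor
    · rintro ⟨u, hu, rfl⟩
      exact ⟨a + b - u, ⟨by linarith [hu.2], by linarith [hu.1]⟩,
        by show g (a + b - (a + b - u)) = g u; rw [show a + b - (a + b - u) = u by ring]⟩
    · rintro ⟨u, hu, rfl⟩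
      exact ⟨a + b - u, ⟨by linarith [hu.2], by linarith [hu.1]⟩, rfl⟩

lemma IsGeodesicSegment.subsegment {S : Set X} {p q r r' : X} (h : IsGeodesicSegment S p q)
    (hr : r ∈ S) (hr' : r' ∈ S) : ∃ T, T ⊆ S ∧ IsGeodesicSegment T r r' := by
  obtain ⟨a, b, g, hab, hg, hga, hgb, hS⟩ := h
  subst hS
  obtain ⟨u, hu, rfl⟩ := hr
  obtain ⟨v, hv, rfl⟩ := hr'
  have key : ∀ u v : ℝ, u ∈ Set.Icc a b → v ∈ Set.Icc a b → u ≤ v →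
      ∃ T, T ⊆ g '' Set.Icc a b ∧ IsGeodesicSegment T (g u) (g v) := by
    intro u v hu hv huv
    refine ⟨g '' Set.Icc u v, Set.image_mono (Set.Icc_subset_Icc hu.1 hv.2), u, v, g, huv,
      ?_, rfl, rfl, rfl⟩
    intro s hs t ht
    exact hg s ⟨le_trans hu.1 hs.1, le_trans hs.2 hv.2⟩ t ⟨le_trans hu.1 ht.1, le_trans ht.2 hv.2⟩
  rcases le_total u v with huv | hvu
  · exact key u v hu hv huv
  · obtain ⟨T, hTS, hT⟩ := key v u hv hu hvu
    exact ⟨T, hTS, hT.symm⟩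

lemma IsGeodesicSegment.isQuasi {lam : ℝ} (hlam : 1 ≤ lam) {S : Set X} {p q : X}
    (h : IsGeodesicSegment S p q) : IsQuasiGeodesicSegment lam S p q := by
  obtain ⟨a, b, g, hab, hg, hga, hgb, hS⟩ := h
  refine ⟨a, b, g, hab, ?_, hga, hgb, hS⟩
  intro eps heps s hs t ht
  rw [hg s hs t ht]
  have h0 : (0:ℝ) ≤ |s - t| := abs_nonneg _
  have hl : (0:ℝ) < lam := by linarith
  constructor
  · have h1 : (1/lam) * |s - t| ≤ |s - t| := by
      rw [one_div, inv_mul_le_iff₀ hl]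
      nlinarith
    linarith
  · nlinarith

lemma localqg_lower {k lam : ℝ} {γ : ℝ → X} (hγ : IsLocalQuasiGeodesicRay k lam γ)
    {s t : ℝ} (hs : 0 ≤ s) (hst : s ≤ t) (hk : t - s ≤ k) :
    (1/lam) * (t - s) ≤ dist (γ s) (γ t) := by
  have habs : |s - t| = t - s := by rw [abs_sub_comm, abs_of_nonneg (by linarith)]
  refine le_of_forall_pos_le_add fun ε hε => ?_
  have h1 := (hγ ε hε s hs t (le_trans hs hst) (by rw [habs]; exact hk)).1
  rw [habs] at h1
  linarith

lemma localqg_upper_loc {k lam : ℝ} {γ : ℝ → X} (hγ : IsLocalQuasiGeodesicRay k lam γ)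
    {s t : ℝ} (hs : 0 ≤ s) (hst : s ≤ t) (hk : t - s ≤ k) :
    dist (γ s) (γ t) ≤ lam * (t - s) := by
  have habs : |s - t| = t - s := by rw [abs_sub_comm, abs_of_nonneg (by linarith)]
  refine le_of_forall_pos_le_add fun ε hε => ?_
  have h1 := (hγ ε hε s hs t (le_trans hs hst) (by rw [habs]; exact hk)).2
  rw [habs] at h1
  linarith

lemma localqg_upper {k lam : ℝ} {γ : ℝ → X} (hγ : IsLocalQuasiGeodesicRay k lam γ)
    (hk : 0 < k) {s t : ℝ} (hs : 0 ≤ s) (hst : s ≤ t) :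
    dist (γ s) (γ t) ≤ lam * (t - s) := by
  have main : ∀ (n : ℕ) (ε : ℝ), 0 < ε → ∀ s t : ℝ, 0 ≤ s → s ≤ t → t - s ≤ n * k →
      dist (γ s) (γ t) ≤ lam * (t - s) + n * ε := by
    intro n
    induction n with
    | zero =>
      intro ε hε s t hs hst hn
      have hts : t = s := by push_cast at hn; linarith
      subst hts
      simp
    | succ n ih =>
      intro ε hε s t hs hst hn
      by_cases hcase : t - s ≤ k
      · have h1 := (hγ ε hε s hs t (le_trans hs hst)
          (by rw [abs_sub_comm, abs_of_nonneg (by linarith)]; exact hcase)).2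
        rw [abs_sub_comm, abs_of_nonneg (by linarith)] at h1
        have : (0:ℝ) ≤ n * ε := by positivity
        push_cast
        linarith
      · have h1 : s ≤ t - k := by linarith
        have h2 : (0:ℝ) ≤ t - k := le_trans hs h1
        have ihh := ih ε hε s (t - k) hs h1 (by push_cast at hn ⊢; linarith)
        have habs : |t - k - t| = k := by
          rw [show t - k - t = -k by ring, abs_neg, abs_of_pos hk]
        have hloc := (hγ ε hε (t - k) h2 t (Set.mem_Ici.mpr (by linarith)) (le_of_eq habs)).2
        rw [habs] at hloc
        calc dist (γ s) (γ t) ≤ dist (γ s) (γ (t - k)) + dist (γ (t - k)) (γ t) :=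
              dist_triangle _ _ _
          _ ≤ lam * (t - s) + (n + 1 : ℕ) * ε := by push_cast; linarith
  obtain ⟨n, hn⟩ := exists_nat_ge ((t - s) / k)
  have hn' : t - s ≤ n * k := by
    rw [div_le_iff₀ hk] at hn
    linarith
  refine le_of_forall_pos_le_add fun ε hε => ?_
  have h1 := main n (ε / (n + 1)) (by positivity) s t hs hst hn'
  have h2 : (n : ℝ) * (ε / (n + 1)) ≤ ε := by
    rw [mul_div_assoc']
    rw [div_le_iff₀ (by positivity : (0:ℝ) < (n:ℝ) + 1)]
    nlinarith
  linarith


lemma restrict_qseg {k lam : ℝ} {γ : ℝ → X} (hγ : IsLocalQuasiGeodesicRay k lam γ)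
    {a b : ℝ} (ha : 0 ≤ a) (hab : a ≤ b) (hbk : b - a ≤ k) :
    IsQuasiGeodesicSegment lam (γ '' Set.Icc a b) (γ a) (γ b) := by
  refine ⟨a, b, γ, hab, ?_, rfl, rfl, rfl⟩
  intro eps heps s hs t ht
  refine hγ eps heps s (Set.mem_Ici.mpr (le_trans ha hs.1)) t
    (Set.mem_Ici.mpr (le_trans ha ht.1)) ?_
  rw [abs_sub_le_iff]
  constructor <;> linarith [hs.1, hs.2, ht.1, ht.2]

lemma claim1 {lam M k : ℝ} {γ : ℝ → X} (hgeo : GeodesicSpace X)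
    (hslim : QuasiGeodesicTrianglesSlim X lam M) (hlam : 1 ≤ lam) (hM : 0 ≤ M)
    (hk : k > 8 * lam * M) (hγ : IsLocalQuasiGeodesicRay k lam γ)
    {s t : ℝ} (hs : 0 ≤ s) (hst : s ≤ t) {G : Set X} (hG : IsGeodesicSegment G (γ s) (γ t))
    {u : ℝ} (hu : u ∈ Set.Icc s t) : infDist (γ u) G ≤ 2 * M := by
  have hl : (0:ℝ) < lam := by linarith
  have hk0 : (0:ℝ) < k := by
    have h8 : (0:ℝ) ≤ 8 * lam * M := mul_nonneg (mul_nonneg (by norm_num) hl.le) hM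
    linarith
  have hGne : G.Nonempty := ⟨γ s, hG.left_mem⟩
  set F : ℝ → ℝ := fun v => infDist (γ v) G with hF
  have hbdd : BddAbove (F '' Set.Icc s t) := by
    refine ⟨lam * (t - s), ?_⟩
    rintro x ⟨v, hv, rfl⟩
    calc F v ≤ dist (γ v) (γ s) := infDist_le_dist_of_mem hG.left_mem
      _ = dist (γ s) (γ v) := dist_comm _ _
      _ ≤ lam * (v - s) := localqg_upper hγ hk0 hs hv.1
      _ ≤ lam * (t - s) := by nlinarith [hv.2]
  have hne : (F '' Set.Icc s t).Nonempty := ⟨F u, ⟨u, hu, rfl⟩⟩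
  set D := sSup (F '' Set.Icc s t) with hD
  have hD0 : (0:ℝ) ≤ D := le_trans infDist_nonneg (le_csSup hbdd ⟨u, hu, rfl⟩)
  have key : ∀ η : ℝ, 0 < η → η ≤ (k/2 - 4*lam*M)/(4*lam) → D ≤ 2*M + η := by
    intro η hη hη0
    have hη0' : lam * η ≤ (k/2 - 4*lam*M)/4 := by
      have h := mul_le_mul_of_nonneg_left hη0 hl.le
      rw [show lam * ((k / 2 - 4 * lam * M) / (4 * lam)) = (k/2 - 4*lam*M)/4 by
        field_simp] at h
      exact h
    obtain ⟨x, ⟨w, hw, rfl⟩, hwD⟩ := exists_lt_of_lt_csSup hne (show D - η < D by linarith)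
    suffices hF2M : F w ≤ 2*M by linarith
    set a := max s (w - k/2) with ha
    set b := min t (w + k/2) with hb
    have has : s ≤ a := le_max_left _ _
    have haw : a ≤ w := max_le hw.1 (by linarith)
    have hwb : w ≤ b := le_min hw.2 (by linarith)
    have hbt : b ≤ t := min_le_left _ _
    have hawh : w - a ≤ k/2 := by
      have := le_max_right s (w - k/2); linarith
    have hbwh : b - w ≤ k/2 := by
      have := min_le_right t (w + k/2); linarith
    have ha0 : (0:ℝ) ≤ a := le_trans hs has
    have hab : a ≤ b := le_trans haw hwb
    have hba : b - a ≤ k := by linarith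
    have hSab := restrict_qseg hγ ha0 hab hba
    have hyexists : ∃ y' ∈ G, dist (γ a) y' ≤ D + η/2 ∧ (dist (γ a) y' = 0 ∨ w - a = k/2) := by
      rcases le_or_gt s (w - k/2) with hcase | hcase
      · have haeq : a = w - k/2 := max_eq_right hcase
        have hamem : a ∈ Set.Icc s t := ⟨has, le_trans hab hbt⟩
        have h1 : F a ≤ D := le_csSup hbdd ⟨a, hamem, rfl⟩
        have h2 : infDist (γ a) G < D + η/2 := lt_of_le_of_lt h1 (by linarith)
        obtain ⟨y', hy'G, hy'⟩ := (infDist_lt_iff hGne).mp h2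
        exact ⟨y', hy'G, le_of_lt hy', Or.inr (by rw [haeq]; ring)⟩
      · have haeq : a = s := max_eq_left (le_of_lt hcase)
        exact ⟨γ s, hG.left_mem, by rw [haeq, dist_self]; linarith,
          Or.inl (by rw [haeq, dist_self])⟩
    have hzexists : ∃ z' ∈ G, dist (γ b) z' ≤ D + η/2 ∧ (dist (γ b) z' = 0 ∨ b - w = k/2) := by
      rcases le_or_gt (w + k/2) t with hcase | hcase
      · have hbeq : b = w + k/2 := min_eq_right hcase
        have hbmem : b ∈ Set.Icc s t := ⟨le_trans has hab, hbt⟩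
        have h1 : F b ≤ D := le_csSup hbdd ⟨b, hbmem, rfl⟩
        have h2 : infDist (γ b) G < D + η/2 := lt_of_le_of_lt h1 (by linarith)
        obtain ⟨z', hz'G, hz'⟩ := (infDist_lt_iff hGne).mp h2
        exact ⟨z', hz'G, le_of_lt hz', Or.inr (by rw [hbeq]; ring)⟩
      · have hbeq : b = t := min_eq_left (le_of_lt hcase)
        exact ⟨γ t, hG.right_mem, by rw [hbeq, dist_self]; linarith,
          Or.inl (by rw [hbeq, dist_self])⟩
    obtain ⟨y', hy'G, hy'd, hy'alt⟩ := hyexists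
    obtain ⟨z', hz'G, hz'd, hz'alt⟩ := hzexists
    obtain ⟨E, hE⟩ := hgeo (γ b) y'
    obtain ⟨A, hA⟩ := hgeo y' (γ a)
    have hT1 := hslim (γ a) (γ b) y' _ E A hSab (hE.isQuasi hlam) (hA.isQuasi hlam)
    obtain ⟨q, hqEA, hqd⟩ := hT1.1 (γ w) ⟨w, ⟨haw, hwb⟩, rfl⟩
    obtain ⟨B, hBsub, hB⟩ := hG.subsegment hy'G hz'G
    obtain ⟨C, hC⟩ := hgeo z' (γ b)
    have hT2 := hslim (γ b) y' z' E B C (hE.isQuasi hlam) (hB.isQuasi hlam) (hC.isQuasi hlam)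
    have hlow_a : (1/lam) * (w - a) ≤ dist (γ a) (γ w) :=
      localqg_lower hγ ha0 haw (by linarith)
    have hlow_b : (1/lam) * (b - w) ≤ dist (γ w) (γ b) :=
      localqg_lower hγ (le_trans ha0 haw) hwb (by linarith)
    rcases hqEA with hqE | hqA
    · -- q ∈ E : apply triangle 2
      obtain ⟨q2, hq2BC, hq2d⟩ := hT2.1 q hqE
      have hq2w : dist (γ w) q2 ≤ 2*M := by
        calc dist (γ w) q2 ≤ dist (γ w) q + dist q q2 := dist_triangle _ _ _
          _ ≤ 2*M := by linarith
      rcases hq2BC with hq2B | hq2C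
      · calc F w ≤ dist (γ w) q2 := infDist_le_dist_of_mem (hBsub hq2B)
          _ ≤ 2*M := hq2w
      · have hsplit := hC.dist_add hq2C
        rcases hz'alt with hdeg | hfar
        · have h0 : dist z' (γ b) = 0 := by rw [dist_comm]; exact hdeg
          have hq20 : q2 = z' := by
            have h1 : dist z' q2 = 0 := by
              have := dist_nonneg (x := z') (y := q2)
              have := dist_nonneg (x := q2) (y := γ b)
              linarith
            exact (dist_eq_zero.mp h1).symm
          calc F w ≤ dist (γ w) q2 := infDist_le_dist_of_mem (hq20 ▸ hz'G)
            _ ≤ 2*M := hq2w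
        · exfalso
          have h1 : dist (γ w) (γ b) ≤ dist (γ w) q2 + dist q2 (γ b) := dist_triangle _ _ _
          have h2 : F w ≤ dist (γ w) q2 + dist q2 z' := by
            calc F w ≤ dist (γ w) z' := infDist_le_dist_of_mem hz'G
              _ ≤ dist (γ w) q2 + dist q2 z' := dist_triangle _ _ _
          have h3 : dist q2 z' = dist z' (γ b) - dist q2 (γ b) := by
            rw [dist_comm q2 z']; linarith
          have h4 : dist z' (γ b) ≤ D + η/2 := by rw [dist_comm]; exact hz'd
          rw [hfar] at hlow_b
          have hstep : (1/lam) * (k/2) < 4*M + (3/2)*η := by linarith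
          have hmul := mul_lt_mul_of_pos_left hstep hl
          have heq : lam * ((1/lam) * (k/2)) = k/2 := by first | (field_simp; ring) | field_simp
          have hlM : (0:ℝ) ≤ lam * M := mul_nonneg hl.le hM
          rw [heq] at hmul
          nlinarith [hη0']
    · -- q ∈ A
      have hsplit := hA.dist_add hqA
      rcases hy'alt with hdeg | hfar
      · have h0 : dist y' (γ a) = 0 := by rw [dist_comm]; exact hdeg
        have hq0 : q = y' := by
          have h1 : dist y' q = 0 := by
            have := dist_nonneg (x := y') (y := q)
            have := dist_nonneg (x := q) (y := γ a)
            linarith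
          exact (dist_eq_zero.mp h1).symm
        calc F w ≤ dist (γ w) q := infDist_le_dist_of_mem (hq0 ▸ hy'G)
          _ ≤ 2*M := by linarith [hM]
      · exfalso
        have h1 : dist (γ a) (γ w) ≤ dist (γ a) q + dist q (γ w) := dist_triangle _ _ _
        have h2 : F w ≤ dist (γ w) q + dist q y' := by
          calc F w ≤ dist (γ w) y' := infDist_le_dist_of_mem hy'G
            _ ≤ dist (γ w) q + dist q y' := dist_triangle _ _ _
        have h3 : dist q y' = dist y' (γ a) - dist q (γ a) := by
          rw [dist_comm q y']; linarith
        have h4 : dist y' (γ a) ≤ D + η/2 := by rw [dist_comm]; exact hy'd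
        rw [hfar] at hlow_a
        have h5 : dist q (γ w) = dist (γ w) q := dist_comm _ _
        have h7 : dist (γ a) q = dist q (γ a) := dist_comm _ _
        have hstep : (1/lam) * (k/2) < 2*M + (3/2)*η := by linarith
        have hmul := mul_lt_mul_of_pos_left hstep hl
        have heq : lam * ((1/lam) * (k/2)) = k/2 := by
          first | (field_simp; ring) | field_simp
        have hlM : (0:ℝ) ≤ lam * M := mul_nonneg hl.le hM
        rw [heq] at hmul
        have hexp : lam * (2*M + (3/2)*η) = 2*(lam*M) + (3/2)*(lam*η) := by ring
        rw [hexp] at hmul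
        linarith [hη0']
  have hFuD : F u ≤ D := le_csSup hbdd ⟨u, hu, rfl⟩
  have hη0pos : 0 < (k/2 - 4*lam*M)/(4*lam) := by
    have h8 : (0:ℝ) ≤ 8 * lam * M := mul_nonneg (mul_nonneg (by norm_num) hl.le) hM
    exact div_pos (by linarith) (by linarith)
  refine le_of_forall_pos_le_add fun ε hε => ?_
  have hkey := key (min ε ((k/2 - 4*lam*M)/(4*lam))) (lt_min hε hη0pos) (min_le_right _ _)
  calc infDist (γ u) G = F u := rfl
    _ ≤ D := hFuD
    _ ≤ 2*M + min ε ((k/2 - 4*lam*M)/(4*lam)) := hkey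
    _ ≤ 2*M + ε := by linarith [min_le_left ε ((k/2 - 4*lam*M)/(4*lam))]

lemma stepdown {lam M k : ℝ} {γ : ℝ → X} (hgeo : GeodesicSpace X)
    (hslim : QuasiGeodesicTrianglesSlim X lam M) (hlam : 1 ≤ lam) (hM : 0 ≤ M)
    (hk : k > 8 * lam * M) (hγ : IsLocalQuasiGeodesicRay k lam γ)
    {s t : ℝ} (hs : 0 ≤ s) (hst : s + (k/2 + lam*M) ≤ t) :
    dist (γ s) (γ (t - (k/2 + lam*M))) + (1/lam) * (k/2 + lam*M) - 4*M
      ≤ dist (γ s) (γ t) := by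
  set Δ := k/2 + lam*M with hΔ
  have hl : (0:ℝ) < lam := by linarith
  have hlM : (0:ℝ) ≤ lam * M := mul_nonneg hl.le hM
  have hk0 : (0:ℝ) < k := by linarith
  have hΔpos : (0:ℝ) < Δ := by rw [hΔ]; linarith
  have hΔk : Δ ≤ k := by rw [hΔ]; linarith
  obtain ⟨G, hG⟩ := hgeo (γ s) (γ t)
  have hmem : t - Δ ∈ Set.Icc s t := ⟨by linarith, by linarith⟩
  have hc1 := claim1 hgeo hslim hlam hM hk hγ hs (by linarith) hG hmem
  refine le_of_forall_pos_le_add fun ε hε => ?_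
  have hGne : G.Nonempty := ⟨γ s, hG.left_mem⟩
  have h2 : infDist (γ (t - Δ)) G < 2*M + ε/2 := lt_of_le_of_lt hc1 (by linarith)
  obtain ⟨q, hqG, hq⟩ := (infDist_lt_iff hGne).mp h2
  have hsplit := hG.dist_add hqG
  have hlow : (1/lam) * Δ ≤ dist (γ (t - Δ)) (γ t) := by
    have h3 : t - Δ ≥ 0 := by linarith
    have h4 : t - (t - Δ) ≤ k := by linarith
    have := localqg_lower hγ h3 (by linarith) h4
    rw [show t - (t - Δ) = Δ by ring] at this
    exact this
  have h4 : dist (γ s) (γ (t - Δ)) ≤ dist (γ s) q + dist q (γ (t - Δ)) := dist_triangle _ _ _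
  have h5 : dist (γ (t - Δ)) (γ t) ≤ dist (γ (t - Δ)) q + dist q (γ t) := dist_triangle _ _ _
  have h6 : dist q (γ (t - Δ)) = dist (γ (t - Δ)) q := dist_comm _ _
  linarith

lemma lower_n {lam M k : ℝ} {γ : ℝ → X} (hgeo : GeodesicSpace X)
    (hslim : QuasiGeodesicTrianglesSlim X lam M) (hlam : 1 ≤ lam) (hM : 0 ≤ M)
    (hk : k > 8 * lam * M) (hγ : IsLocalQuasiGeodesicRay k lam γ) :
    ∀ n : ℕ, ∀ s t : ℝ, 0 ≤ s → s ≤ t → t - s ≤ k + n * (k/2 + lam*M) →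
      (1/lam) * (t - s) - 4*M*n ≤ dist (γ s) (γ t) := by
  have hl : (0:ℝ) < lam := by linarith
  have hlM : (0:ℝ) ≤ lam * M := mul_nonneg hl.le hM
  have hk0 : (0:ℝ) < k := by linarith
  intro n
  induction n with
  | zero =>
    intro s t hs hst hn
    push_cast at hn ⊢
    have := localqg_lower hγ hs hst (by linarith)
    linarith
  | succ n ih =>
    intro s t hs hst hn
    have hΔpos : (0:ℝ) < k/2 + lam*M := by linarith
    have hΔk : k/2 + lam*M ≤ k := by linarith
    have hnn : (0:ℝ) ≤ (n:ℝ) := Nat.cast_nonneg n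
    by_cases hcase : t - s ≤ k + n * (k/2 + lam*M)
    · have := ih s t hs hst hcase
      push_cast
      have h9 : (0:ℝ) ≤ 4*M := by linarith
      nlinarith
    · push_neg at hcase
      have h0 : (0:ℝ) ≤ (n:ℝ) * (k/2 + lam*M) := mul_nonneg hnn hΔpos.le
      have h1 : s + (k/2 + lam*M) ≤ t := by linarith
      have h2 := stepdown hgeo hslim hlam hM hk hγ hs h1
      have h3 := ih s (t - (k/2 + lam*M)) hs (by linarith)
        (by push_cast at hn ⊢; linarith)
      have h4 : (1/lam) * (t - (k/2 + lam*M) - s) + (1/lam) * (k/2 + lam*M)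
          = (1/lam) * (t - s) := by ring
      push_cast
      push_cast at h3
      linarith

end Aux

/-- In a `δ`-hyperbolic geodesic space where every `λ`-quasi-geodesic triangle is `M`-slim,
every `k`-local `λ`-quasi-geodesic ray with `k > 8λM` is a `(λ*, 2M)`-quasi-geodesic ray,
where `λ* = (1/λ - 4M/(k/2 + λM))⁻¹`. -/
theorem stmt3 {X : Type*} [MetricSpace X] (hgeo : GeodesicSpace X)
    (δ : ℝ) (hδ : 0 ≤ δ) (hhyp : DeltaHyperbolic X δ)
    (lam M k : ℝ) (hlam : 1 ≤ lam) (hM : 0 ≤ M)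
    (hslim : QuasiGeodesicTrianglesSlim X lam M)
    (γ : ℝ → X) (hk : k > 8 * lam * M) (hγ : IsLocalQuasiGeodesicRay k lam γ) :
    IsQuasiGeodesicRay (1/lam - 4*M/(k/2 + lam*M))⁻¹ (2*M) γ := by
  have hl : (0:ℝ) < lam := by linarith
  have hlM : (0:ℝ) ≤ lam * M := mul_nonneg hl.le hM
  have hk0 : (0:ℝ) < k := by linarith
  have hΔpos : (0:ℝ) < k/2 + lam*M := by linarith
  have hc0 : 0 ≤ 4*M/(k/2 + lam*M) := by positivity
  have hsub : 0 < 1/lam - 4*M/(k/2 + lam*M) := by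
    rw [sub_pos, div_lt_div_iff₀ hΔpos hl]
    nlinarith
  have hlamle : lam ≤ (1/lam - 4*M/(k/2 + lam*M))⁻¹ := by
    have h1 : 1/lam - 4*M/(k/2 + lam*M) ≤ lam⁻¹ := by
      rw [← one_div]; linarith
    calc lam = (lam⁻¹)⁻¹ := (inv_inv lam).symm
      _ ≤ (1/lam - 4*M/(k/2 + lam*M))⁻¹ := by
        exact inv_anti₀ hsub h1
  have main : ∀ s t : ℝ, 0 ≤ s → s ≤ t →
      (1/lam - 4*M/(k/2 + lam*M)) * (t - s) - 2*M ≤ dist (γ s) (γ t) ∧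
      dist (γ s) (γ t) ≤ (1/lam - 4*M/(k/2 + lam*M))⁻¹ * (t - s) + 2*M := by
    intro s t hs hst
    constructor
    · obtain ⟨n, hn1, hn2⟩ : ∃ n : ℕ, t - s ≤ k + n * (k/2 + lam*M) ∧
          4*M*n ≤ 4*M/(k/2 + lam*M) * (t - s) + 2*M := by
        rcases le_or_gt (t - s) k with hc | hc
        · refine ⟨0, by push_cast; linarith, ?_⟩
          push_cast
          have h9 : 0 ≤ 4*M/(k/2 + lam*M)*(t-s) := mul_nonneg hc0 (by linarith)
          linarith
        · set n := ⌈(t - s - k)/(k/2 + lam*M)⌉₊ with hn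
          have hr0 : 0 ≤ (t - s - k)/(k/2 + lam*M) := div_nonneg (by linarith) hΔpos.le
          have h1 : (t - s - k)/(k/2 + lam*M) ≤ n := Nat.le_ceil _
          have h2 : (n:ℝ) < (t - s - k)/(k/2 + lam*M) + 1 := Nat.ceil_lt_add_one hr0
          refine ⟨n, ?_, ?_⟩
          · rw [div_le_iff₀ hΔpos] at h1
            linarith
          · have h2' := mul_lt_mul_of_pos_right h2 hΔpos
            have heq : ((t - s - k)/(k/2 + lam*M) + 1) * (k/2 + lam*M)
                = t - s - k + (k/2 + lam*M) := by
              field_simp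
            rw [heq] at h2'
            have h3 : (n:ℝ) * (k/2 + lam*M) ≤ t - s := by linarith
            have h5 := mul_le_mul_of_nonneg_left h3 hc0
            have heq2 : 4*M/(k/2 + lam*M) * ((n:ℝ) * (k/2 + lam*M)) = 4*M*(n:ℝ) := by
              field_simp
            rw [heq2] at h5
            linarith
      have hlow := lower_n hgeo hslim hlam hM hk hγ n s t hs hst hn1
      have hexp : (1/lam - 4*M/(k/2 + lam*M)) * (t - s)
          = (1/lam) * (t - s) - 4*M/(k/2 + lam*M) * (t - s) := by ring
      linarith
    · have hup := localqg_upper hγ hk0 hs hst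
      have h6 : lam * (t - s) ≤ (1/lam - 4*M/(k/2 + lam*M))⁻¹ * (t - s) :=
        mul_le_mul_of_nonneg_right hlamle (by linarith)
      linarith
  intro s hs t ht
  rw [Set.mem_Ici] at hs ht
  have hone : (1:ℝ)/((1/lam - 4*M/(k/2 + lam*M))⁻¹) = 1/lam - 4*M/(k/2 + lam*M) := by
    rw [one_div, inv_inv]
  rcases le_total s t with h | h
  · have habs : |s - t| = t - s := by rw [abs_sub_comm, abs_of_nonneg (by linarith)]
    obtain ⟨h1, h2⟩ := main s t hs h
    rw [habs, hone]
    exact ⟨h1, h2⟩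
  · have habs : |s - t| = s - t := abs_of_nonneg (by linarith)
    obtain ⟨h1, h2⟩ := main t s ht h
    rw [habs, hone, dist_comm]
    exact ⟨h1, h2⟩
end

section
/- Let (X,d) be a geodesic space, λ ≥ 1, and M ≥ 0 such that every λ-quasi-geodesic triangle in X is M-slim. Let γ:[0,∞)→X be a k-local λ-quasi-geodesic ray with k > 8λM, and let a, b ∈ [0,∞) with b − a > k. Then the image of the restriction of γ to [a,b] is contained in the closed 2M-neighborhood of any geodesic segment joining γ(a) and γ(b). -/
open Set Filter Metric

/-!
Let `D` be the maximum of `t ↦ d(γ t, S)` on `[a, b]`; it exists because a local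
quasi-geodesic is locally Lipschitz, hence continuous. Take `t` where it is attained and the
subarc of `γ` of length `k` centred at `t`, cut off at `a` and `b`. Joining its endpoints to
nearest points of `S` gives a quadrilateral with three geodesic sides, which is `2M`-slim.
If `γ t` is `2M`-close to the side on `S` we are done. Otherwise it is `2M`-close to a point `w`
of a geodesic from an endpoint `x` to its nearest point `z ∈ S`. Either the arc was cut off,
so `x = z ∈ S` and `d(γ t, S) ≤ 2M`, or `d(γ t, x) ≥ k / (2λ) > 4M`, in which case
`d(γ t, S) ≤ d(γ t, w) + d(w, z) ≤ 2 d(γ t, w) + d(x, z) - d(γ t, x) < D`, contradicting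
the choice of `t`.
-/

section Geodesic

variable {X : Type*} [MetricSpace X]

namespace IsGeodesicSegment

variable {S : Set X} {x y : X}

theorem left_mem_s4 (h : IsGeodesicSegment S x y) : x ∈ S := by
  obtain ⟨a, b, g, hab, -, rfl, -, rfl⟩ := h
  exact mem_image_of_mem g (left_mem_Icc.2 hab)

theorem isCompact (h : IsGeodesicSegment S x y) : IsCompact S := by
  obtain ⟨a, b, g, -, hg, -, -, rfl⟩ := h
  refine isCompact_Icc.image_of_continuousOn (LipschitzOnWith.continuousOn (K := 1) ?_)
  refine LipschitzOnWith.of_dist_le_mul fun s hs t ht => ?_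
  rw [hg s hs t ht, Real.dist_eq, NNReal.coe_one, one_mul]

theorem symm_s4 (h : IsGeodesicSegment S x y) : IsGeodesicSegment S y x := by
  obtain ⟨a, b, g, hab, hg, rfl, rfl, rfl⟩ := h
  refine ⟨-b, -a, g ∘ Neg.neg, neg_le_neg hab, fun s hs t ht => ?_, by simp, by simp, ?_⟩
  · rw [Function.comp_apply, Function.comp_apply,
      hg _ (neg_mem_Icc_iff.2 hs) _ (neg_mem_Icc_iff.2 ht), ← abs_neg]
    ring_nf
  · rw [image_comp, image_neg_Icc, neg_neg, neg_neg]

theorem dist_add_dist (h : IsGeodesicSegment S x y) {w : X} (hw : w ∈ S) :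
    dist x w + dist w y = dist x y := by
  obtain ⟨a, b, g, hab, hg, rfl, rfl, rfl⟩ := h
  obtain ⟨r, hr, rfl⟩ := hw
  have ha : a ∈ Icc a b := left_mem_Icc.2 hab
  have hb : b ∈ Icc a b := right_mem_Icc.2 hab
  rw [hg a ha r hr, hg r hr b hb, hg a ha b hb, abs_of_nonpos (by linarith [hr.1]),
    abs_of_nonpos (by linarith [hr.2]), abs_of_nonpos (by linarith)]
  ring

theorem exists_subset (h : IsGeodesicSegment S x y) {p q : X} (hp : p ∈ S) (hq : q ∈ S) :
    ∃ T ⊆ S, IsGeodesicSegment T p q := by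
  obtain ⟨a, b, g, -, hg, -, -, rfl⟩ := h
  have sub : ∀ u ∈ Icc a b, ∀ v ∈ Icc a b, u ≤ v →
      g '' Icc u v ⊆ g '' Icc a b ∧ IsGeodesicSegment (g '' Icc u v) (g u) (g v) :=
    fun u hu v hv huv => ⟨image_mono (Icc_subset_Icc hu.1 hv.2),
      u, v, g, huv, fun s hs t ht => hg s ⟨hu.1.trans hs.1, hs.2.trans hv.2⟩ t
        ⟨hu.1.trans ht.1, ht.2.trans hv.2⟩, rfl, rfl, rfl⟩
  obtain ⟨u, hu, rfl⟩ := hp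
  obtain ⟨v, hv, rfl⟩ := hq
  rcases le_total u v with huv | hvu
  · exact ⟨_, sub u hu v hv huv⟩
  · exact ⟨_, (sub v hv u hu hvu).1, (sub v hv u hu hvu).2.symm_s4⟩

theorem isQuasiGeodesicSegment (h : IsGeodesicSegment S x y) {lam : ℝ} (hlam : 1 ≤ lam) :
    IsQuasiGeodesicSegment lam S x y := by
  obtain ⟨a, b, g, hab, hg, hx, hy, rfl⟩ := h
  refine ⟨a, b, g, hab, fun ε hε s hs t ht => ?_, hx, hy, rfl⟩
  have hst := abs_nonneg (s - t)
  have hinv : 1 / lam ≤ 1 := (div_le_one (by linarith)).2 hlam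
  rw [hg s hs t ht]
  constructor <;> nlinarith

end IsGeodesicSegment

-- Cut along a diagonal into two slim triangles.
theorem QuasiGeodesicTrianglesSlim.quadrilateral {lam M : ℝ}
    (hslim : QuasiGeodesicTrianglesSlim X lam M) (hgeo : GeodesicSpace X) (hlam : 1 ≤ lam)
    (hM : 0 ≤ M) {Q G₁ G₂ T : Set X} {x₁ x₂ y₁ y₂ : X}
    (hQ : IsQuasiGeodesicSegment lam Q x₁ x₂) (hG₁ : IsGeodesicSegment G₁ y₁ x₁)
    (hG₂ : IsGeodesicSegment G₂ y₂ x₂) (hT : IsGeodesicSegment T y₁ y₂) :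
    InClosedNbhd Q (G₁ ∪ T ∪ G₂) (2 * M) := by
  intro p hp
  obtain ⟨E, hE⟩ := hgeo x₂ y₁
  obtain ⟨w, hw, hpw⟩ := (hslim x₁ x₂ y₁ Q E G₁ hQ (hE.isQuasiGeodesicSegment hlam)
    (hG₁.isQuasiGeodesicSegment hlam)).1 p hp
  rcases hw with hwE | hwG₁
  · obtain ⟨v, hv, hwv⟩ := (hslim x₂ y₁ y₂ E T G₂ (hE.isQuasiGeodesicSegment hlam)
      (hT.isQuasiGeodesicSegment hlam) (hG₂.isQuasiGeodesicSegment hlam)).1 w hwE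
    refine ⟨v, ?_, (dist_triangle p w v).trans (by linarith)⟩
    rcases hv with hvT | hvG₂
    exacts [Or.inl (Or.inr hvT), Or.inr hvG₂]
  · exact ⟨w, Or.inl (Or.inl hwG₁), by linarith⟩

theorem infDist_le_or_lt_of_mem_geodesicSegment {S G : Set X} {p w x z : X} {M D : ℝ}
    (hG : IsGeodesicSegment G z x) (hz : z ∈ S) (hxz : infDist x S = dist x z) (hw : w ∈ G)
    (hpw : dist p w ≤ 2 * M) (hxD : infDist x S ≤ D) (hx : infDist x S = 0 ∨ 4 * M < dist p x) :
    infDist p S ≤ 2 * M ∨ infDist p S < D := by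
  have hwz : dist w z = infDist x S - dist w x := by
    rw [hxz, dist_comm x z, ← hG.dist_add_dist hw, dist_comm z w]
    ring
  have hpS : infDist p S ≤ dist p w + infDist x S - dist w x :=
    calc infDist p S ≤ dist p z := infDist_le_dist_of_mem hz
      _ ≤ dist p w + dist w z := dist_triangle p w z
      _ = dist p w + infDist x S - dist w x := by rw [hwz]; ring
  rcases hx with hx0 | hfar
  · left
    linarith [dist_nonneg (x := w) (y := x)]
  · right
    linarith [dist_triangle p w x]

theorem infDist_le_or_lt_of_quasiGeodesicSegment {lam M D : ℝ}
    (hslim : QuasiGeodesicTrianglesSlim X lam M) (hgeo : GeodesicSpace X) (hlam : 1 ≤ lam)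
    (hM : 0 ≤ M) {S Q : Set X} {x y x₁ x₂ p : X} (hS : IsGeodesicSegment S x y)
    (hQ : IsQuasiGeodesicSegment lam Q x₁ x₂) (hp : p ∈ Q)
    (hD₁ : infDist x₁ S ≤ D) (hD₂ : infDist x₂ S ≤ D)
    (h₁ : infDist x₁ S = 0 ∨ 4 * M < dist p x₁) (h₂ : infDist x₂ S = 0 ∨ 4 * M < dist p x₂) :
    infDist p S ≤ 2 * M ∨ infDist p S < D := by
  obtain ⟨y₁, hy₁, hxy₁⟩ := hS.isCompact.exists_infDist_eq_dist ⟨x, hS.left_mem_s4⟩ x₁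
  obtain ⟨y₂, hy₂, hxy₂⟩ := hS.isCompact.exists_infDist_eq_dist ⟨x, hS.left_mem_s4⟩ x₂
  obtain ⟨G₁, hG₁⟩ := hgeo y₁ x₁
  obtain ⟨G₂, hG₂⟩ := hgeo y₂ x₂
  obtain ⟨T, hTS, hT⟩ := hS.exists_subset hy₁ hy₂
  obtain ⟨w, hw, hpw⟩ := hslim.quadrilateral hgeo hlam hM hQ hG₁ hG₂ hT p hp
  rcases hw with (hwG₁ | hwT) | hwG₂
  · exact infDist_le_or_lt_of_mem_geodesicSegment hG₁ hy₁ hxy₁ hwG₁ hpw hD₁ h₁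
  · exact Or.inl ((infDist_le_dist_of_mem (hTS hwT)).trans hpw)
  · exact infDist_le_or_lt_of_mem_geodesicSegment hG₂ hy₂ hxy₂ hwG₂ hpw hD₂ h₂

end Geodesic

namespace IsLocalQuasiGeodesicRay

variable {X : Type*} [MetricSpace X] {k lam : ℝ} {γ : ℝ → X} {s t : ℝ}

theorem le_dist (hγ : IsLocalQuasiGeodesicRay k lam γ) (hs : 0 ≤ s) (ht : 0 ≤ t)
    (hst : |s - t| ≤ k) : 1 / lam * |s - t| ≤ dist (γ s) (γ t) :=
  le_of_forall_pos_le_add fun ε hε => by linarith [(hγ ε hε s hs t ht hst).1]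

theorem dist_le (hγ : IsLocalQuasiGeodesicRay k lam γ) (hs : 0 ≤ s) (ht : 0 ≤ t)
    (hst : |s - t| ≤ k) : dist (γ s) (γ t) ≤ lam * |s - t| :=
  le_of_forall_pos_le_add fun ε hε => (hγ ε hε s hs t ht hst).2

theorem continuousOn (hγ : IsLocalQuasiGeodesicRay k lam γ) (hk : 0 < k) :
    ContinuousOn γ (Ici 0) := by
  refine Metric.continuousOn_iff.2 fun t ht ε hε =>
    ⟨min k (ε / (|lam| + 1)), by positivity, fun s hs hst => ?_⟩
  rw [Real.dist_eq, lt_min_iff] at hst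
  calc dist (γ s) (γ t) ≤ lam * |s - t| := hγ.dist_le hs ht hst.1.le
    _ ≤ (|lam| + 1) * |s - t| := by gcongr; linarith [le_abs_self lam]
    _ < ε := by rw [← lt_div_iff₀' (by positivity)]; exact hst.2

theorem isQuasiGeodesicSegment_image (hγ : IsLocalQuasiGeodesicRay k lam γ) (hs : 0 ≤ s)
    (hst : s ≤ t) (hts : t - s ≤ k) :
    IsQuasiGeodesicSegment lam (γ '' Icc s t) (γ s) (γ t) :=
  ⟨s, t, γ, hst, fun ε hε u hu v hv => hγ ε hε u (hs.trans hu.1) v (hs.trans hv.1)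
    (abs_sub_le_iff.2 ⟨by linarith [hu.2, hv.1], by linarith [hu.1, hv.2]⟩), rfl, rfl, rfl⟩

theorem four_mul_lt_dist {M : ℝ} (hγ : IsLocalQuasiGeodesicRay k lam γ) (hlam : 0 < lam)
    (hk : 8 * lam * M < k) (hs : 0 ≤ s) (ht : 0 ≤ t) (hst : |s - t| = k / 2) :
    4 * M < dist (γ s) (γ t) := by
  have hlow := hγ.le_dist hs ht (by linarith [abs_nonneg (s - t)])
  have hM : 4 * M < 1 / lam * (k / 2) := by
    rw [one_div, inv_mul_eq_div, lt_div_iff₀ hlam]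
    linarith
  rw [hst] at hlow
  linarith

theorem infDist_le_or_lt {M D a b t : ℝ} {S : Set X} (hγ : IsLocalQuasiGeodesicRay k lam γ)
    (hslim : QuasiGeodesicTrianglesSlim X lam M) (hgeo : GeodesicSpace X) (hlam : 1 ≤ lam)
    (hM : 0 ≤ M) (hk : 8 * lam * M < k) (ha : 0 ≤ a) (hS : IsGeodesicSegment S (γ a) (γ b))
    (hD : ∀ s ∈ Icc a b, infDist (γ s) S ≤ D) (ht : t ∈ Icc a b) :
    infDist (γ t) S ≤ 2 * M ∨ infDist (γ t) S < D := by
  have hlam0 : 0 < lam := by linarith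
  have hk0 : 0 < k := lt_of_le_of_lt (mul_nonneg (by linarith) hM) hk
  have hs₁ : max a (t - k / 2) ∈ Icc a b := ⟨le_max_left _ _, max_le (ht.1.trans ht.2) (by linarith [ht.2])⟩
  have hs₂ : min b (t + k / 2) ∈ Icc a b := ⟨le_min (ht.1.trans ht.2) (by linarith [ht.1]), min_le_left _ _⟩
  have hts : t ∈ Icc (max a (t - k / 2)) (min b (t + k / 2)) :=
    ⟨max_le ht.1 (by linarith), le_min ht.2 (by linarith)⟩
  have hfar₁ : infDist (γ (max a (t - k / 2))) S = 0 ∨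
      4 * M < dist (γ t) (γ (max a (t - k / 2))) := by
    rcases max_choice a (t - k / 2) with h | h <;> rw [h]
    · exact Or.inl (infDist_zero_of_mem hS.left_mem_s4)
    · refine Or.inr (hγ.four_mul_lt_dist hlam0 hk (ha.trans ht.1) (ha.trans (h ▸ hs₁.1)) ?_)
      rw [sub_sub_cancel, abs_of_pos (by linarith)]
  have hfar₂ : infDist (γ (min b (t + k / 2))) S = 0 ∨
      4 * M < dist (γ t) (γ (min b (t + k / 2))) := by
    rcases min_choice b (t + k / 2) with h | h <;> rw [h]
    · exact Or.inl (infDist_zero_of_mem hS.symm_s4.left_mem_s4)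
    · refine Or.inr (hγ.four_mul_lt_dist hlam0 hk (ha.trans ht.1) (ha.trans (h ▸ hs₂.1)) ?_)
      rw [sub_add_cancel_left, abs_neg, abs_of_pos (by linarith)]
  have hQ := hγ.isQuasiGeodesicSegment_image (ha.trans hs₁.1) (hts.1.trans hts.2)
    (by linarith [le_max_right a (t - k / 2), min_le_right b (t + k / 2)])
  exact infDist_le_or_lt_of_quasiGeodesicSegment hslim hgeo hlam hM hS hQ ⟨t, hts, rfl⟩
    (hD _ hs₁) (hD _ hs₂) hfar₁ hfar₂

end IsLocalQuasiGeodesicRay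

theorem stmt4_general {X : Type*} [MetricSpace X] (hgeo : GeodesicSpace X)
    (lam M k : ℝ) (hlam : 1 ≤ lam) (hM : 0 ≤ M)
    (hslim : QuasiGeodesicTrianglesSlim X lam M)
    (γ : ℝ → X) (hk : k > 8 * lam * M) (hγ : IsLocalQuasiGeodesicRay k lam γ)
    (a b : ℝ) (ha : a ∈ Set.Ici (0:ℝ))
    (S : Set X) (hS : IsGeodesicSegment S (γ a) (γ b)) :
    InClosedNbhd (γ '' Set.Icc a b) S (2 * M) := by
  rintro _ ⟨t, ht, rfl⟩
  have hk0 : 0 < k := lt_of_le_of_lt (mul_nonneg (by linarith) hM) hk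
  have hcont : ContinuousOn (fun s => infDist (γ s) S) (Icc a b) :=
    (continuous_infDist_pt S).comp_continuousOn
      ((hγ.continuousOn hk0).mono fun s hs => le_trans ha hs.1)
  obtain ⟨t₀, ht₀, hmax⟩ := isCompact_Icc.exists_isMaxOn ⟨t, ht⟩ hcont
  have h₀ : infDist (γ t₀) S ≤ 2 * M :=
    (hγ.infDist_le_or_lt hslim hgeo hlam hM hk ha hS (fun s hs => hmax hs) ht₀).resolve_right
      (lt_irrefl _)
  obtain ⟨q, hq, hdist⟩ := hS.isCompact.exists_infDist_eq_dist ⟨_, hS.left_mem_s4⟩ (γ t)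
  exact ⟨q, hq, hdist ▸ (hmax ht).trans h₀⟩

/-- In a geodesic space where every `λ`-quasi-geodesic triangle is `M`-slim, if `γ` is a
`k`-local `λ`-quasi-geodesic ray with `k > 8λM` and `a, b ∈ [0, ∞)` with `b - a > k`, then
the image of `γ` restricted to `[a, b]` is contained in the closed `2M`-neighborhood of any
geodesic segment joining `γ(a)` and `γ(b)`. -/
theorem stmt4 {X : Type*} [MetricSpace X] (hgeo : GeodesicSpace X)
    (lam M k : ℝ) (hlam : 1 ≤ lam) (hM : 0 ≤ M)
    (hslim : QuasiGeodesicTrianglesSlim X lam M)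
    (γ : ℝ → X) (hk : k > 8 * lam * M) (hγ : IsLocalQuasiGeodesicRay k lam γ)
    (a b : ℝ) (ha : a ∈ Set.Ici (0:ℝ)) (hb : b ∈ Set.Ici (0:ℝ)) (hab : b - a > k)
    (S : Set X) (hS : IsGeodesicSegment S (γ a) (γ b)) :
    InClosedNbhd (γ '' Set.Icc a b) S (2 * M) :=
  stmt4_general hgeo lam M k hlam hM hslim γ hk hγ a b ha S hS
end
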